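/- Compactness of independence logic for sets of formulas (lax semantics): Let τ be a first-order vocabulary and Γ a set of formulas of independence logic FO(dep, ⊥_c, ⊆, |) over τ (with possibly uncountably many free variables). If every finite subset Γ₀ ⊆ Γ is satisfiable (i.e. M ⊨_X Γ₀ for some τ-structure M and some nonempty team X of M), then Γ is satisfiable: there exist a τ-structure M and a nonempty team X of M such that M ⊨_X φ for every φ ∈ Γ. -/

import Mathlib

/-!
Take a model `(M i, X i)` of every finite subset `i` of `Γ` and an ultrafilter `U` on these
finite subsets extending the filter of cones `{i | φ ∈ i}`. Łoś's theorem holds in its upward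
half for team semantics: call the ultraproduct team the set of assignments `v ↦ [i ↦ g i v]`
for families with `g i ∈ X i` for `U`-almost all `i`; then a formula satisfied by `U`-almost all
of the teams `X i` is satisfied by the ultraproduct team. Formulas are in negation normal form,
so the upward half suffices. Witnesses (for `∃`, inclusion and independence) are chosen
coordinatewise, and disjunctions split because `U` is an ultrafilter.
-/

universe u v w

open FirstOrder FirstOrder.Language Filter

namespace TeamSemantics

/-- The supplemented team `X(F/x) = {s(a/x) : s ∈ X, a ∈ F(s)}`. -/
def supFun {V M : Type*} [DecidableEq V] (X : Set (V → M)) (x : V) (F : (V → M) → Set M) :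
    Set (V → M) :=
  {t | ∃ s ∈ X, ∃ a ∈ F s, t = Function.update s x a}

/-- The team `X(a/x) = {s(a/x) : s ∈ X}`. -/
def supElt {V M : Type*} [DecidableEq V] (X : Set (V → M)) (x : V) (a : M) : Set (V → M) :=
  {t | ∃ s ∈ X, t = Function.update s x a}

/-- The duplicated team `X(M/x) = {s(a/x) : s ∈ X, a ∈ M}`. -/
def dup {V M : Type*} [DecidableEq V] (X : Set (V → M)) (x : V) : Set (V → M) :=
  {t | ∃ s ∈ X, ∃ a : M, t = Function.update s x a}

/-- Formulas of independence logic `FO(dep, ⊥_c, ⊆, |)` over the vocabulary `L`, with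
variables from `V`, in negation normal form: first-order literals, dependence,
independence, inclusion and exclusion atoms, closed under `∧`, `∨`, `∃`, `∀`. -/
inductive TeamFormula (L : FirstOrder.Language.{u, u}) (V : Type v) : Type (max u v) where
  | equal : L.Term V → L.Term V → TeamFormula L V
  | nequal : L.Term V → L.Term V → TeamFormula L V
  | rel : ∀ {n : ℕ}, L.Relations n → (Fin n → L.Term V) → TeamFormula L V
  | nrel : ∀ {n : ℕ}, L.Relations n → (Fin n → L.Term V) → TeamFormula L V
  | dep : ∀ {n : ℕ}, (Fin n → V) → V → TeamFormula L V
  | indep : ∀ {k m n : ℕ}, (Fin k → V) → (Fin m → V) → (Fin n → V) → TeamFormula L V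
  | incl : ∀ {n : ℕ}, (Fin n → V) → (Fin n → V) → TeamFormula L V
  | excl : ∀ {n : ℕ}, (Fin n → V) → (Fin n → V) → TeamFormula L V
  | and : TeamFormula L V → TeamFormula L V → TeamFormula L V
  | or : TeamFormula L V → TeamFormula L V → TeamFormula L V
  | ex : V → TeamFormula L V → TeamFormula L V
  | all : V → TeamFormula L V → TeamFormula L V

/-- Lax team semantics `M ⊨_X φ` for independence logic. -/
def Models {L : FirstOrder.Language.{u, u}} {V : Type v} [DecidableEq V]
    (M : Type w) [str : L.Structure M] :
    TeamFormula L V → Set (V → M) → Prop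
  | .equal t₁ t₂, X => ∀ s ∈ X, t₁.realize s = t₂.realize s
  | .nequal t₁ t₂, X => ∀ s ∈ X, t₁.realize s ≠ t₂.realize s
  | .rel R ts, X => ∀ s ∈ X, Structure.RelMap R (fun k => (ts k).realize s)
  | .nrel R ts, X => ∀ s ∈ X, ¬ Structure.RelMap R (fun k => (ts k).realize s)
  | .dep xs y, X => ∀ s ∈ X, ∀ s' ∈ X, (∀ k, s (xs k) = s' (xs k)) → s y = s' y
  | .indep xs zs ys, X => ∀ s ∈ X, ∀ s' ∈ X, (∀ k, s (zs k) = s' (zs k)) →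
      ∃ s'' ∈ X, (∀ k, s'' (xs k) = s (xs k)) ∧ (∀ k, s'' (zs k) = s (zs k)) ∧
        (∀ k, s'' (ys k) = s' (ys k))
  | .incl xs ys, X => ∀ s ∈ X, ∃ s' ∈ X, ∀ k, s (xs k) = s' (ys k)
  | .excl xs ys, X => ∀ s ∈ X, ∀ s' ∈ X, (fun k => s (xs k)) ≠ (fun k => s' (ys k))
  | .and φ ψ, X => Models M φ X ∧ Models M ψ X
  | .or φ ψ, X => ∃ Y Z, Y ∪ Z = X ∧ Models M φ Y ∧ Models M ψ Z
  | .ex x φ, X => ∃ F : (V → M) → Set M, (∀ s ∈ X, (F s).Nonempty) ∧ Models M φ (supFun X x F)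
  | .all x φ, X => Models M φ (dup X x)

section Team

variable {V : Type v} [DecidableEq V] {M : Type w}

theorem mem_dup_iff {X : Set (V → M)} {x : V} {t : V → M} :
    t ∈ dup X x ↔ ∃ b, Function.update t x b ∈ X := by
  constructor
  · rintro ⟨s, hs, a, rfl⟩
    exact ⟨s x, by simpa using hs⟩
  · rintro ⟨b, hb⟩
    exact ⟨_, hb, t x, by simp⟩

theorem models_ex_iff {L : FirstOrder.Language.{u, u}} [L.Structure M] {x : V} {φ : TeamFormula L V}
    {X : Set (V → M)} :
    Models M (.ex x φ) X ↔
      ∃ Z ⊆ dup X x, (∀ s ∈ X, ∃ b, Function.update s x b ∈ Z) ∧ Models M φ Z := by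
  constructor
  · rintro ⟨F, hF, hφ⟩
    refine ⟨supFun X x F, ?_, fun s hs => ?_, hφ⟩
    · rintro _ ⟨s, hs, a, -, rfl⟩
      exact ⟨s, hs, a, rfl⟩
    · obtain ⟨b, hb⟩ := hF s hs
      exact ⟨b, s, hs, b, hb, rfl⟩
  · rintro ⟨Z, hZX, hXZ, hφ⟩
    refine ⟨fun s => {b | Function.update s x b ∈ Z}, hXZ, ?_⟩
    convert hφ
    ext t
    constructor
    · rintro ⟨s, -, b, hb, rfl⟩
      exact hb
    · intro ht
      obtain ⟨s, hs, b, rfl⟩ := hZX ht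
      exact ⟨s, hs, b, ht, rfl⟩

end Team

/-- Unlike the coercion, which elaborates to `Quotient.mk'`, this has type `l.Product M` on the
nose, so that equations involving it can be rewritten. -/
def _root_.Filter.Product.mk {I : Type*} (l : Filter I) {M : I → Type*} (f : ∀ i, M i) :
    l.Product M :=
  f

theorem _root_.Filter.Product.mk_eq_mk_iff {I : Type*} {l : Filter I} {M : I → Type*}
    {f g : ∀ i, M i} :
    Filter.Product.mk l f = Filter.Product.mk l g ↔ ∀ᶠ i in l, f i = g i :=
  Quotient.eq''

theorem _root_.Filter.Product.mk_surjective {I : Type*} (l : Filter I) {M : I → Type*} :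
    Function.Surjective (Filter.Product.mk l (M := M)) :=
  Quotient.mk''_surjective

section Ultraproduct

variable {I : Type*} (U : Ultrafilter I) {M : I → Type*} {V : Type v}

def ultraAssignment (g : ∀ i, V → M i) : V → (U : Filter I).Product M :=
  fun v => Filter.Product.mk U fun i => g i v

theorem ultraAssignment_comp_eq_iff {n : ℕ} {g g' : ∀ i, V → M i} {xs ys : Fin n → V} :
    (∀ k, ultraAssignment U g (xs k) = ultraAssignment U g' (ys k)) ↔
      ∀ᶠ i in U, ∀ k, g i (xs k) = g' i (ys k) := by
  simp only [eventually_all]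
  exact forall_congr' fun _ => Filter.Product.mk_eq_mk_iff

/-- When `V` is infinite, `ultraAssignment U g ∈ ultraTeam U Y` does not imply
`∀ᶠ i in U, g i ∈ Y i`: two families can induce the same assignment without agreeing on a
`U`-large set of indices. -/
def ultraTeam (Y : ∀ i, Set (V → M i)) : Set (V → (U : Filter I).Product M) :=
  ultraAssignment U '' {g | ∀ᶠ i in U, g i ∈ Y i}

variable {U} {Y Z : ∀ i, Set (V → M i)}

theorem ultraTeam_nonempty (h : ∀ i, (Y i).Nonempty) : (ultraTeam U Y).Nonempty :=
  ⟨_, fun i => (h i).some, .of_forall fun i => (h i).some_mem, rfl⟩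

theorem ultraTeam_mono (h : ∀ᶠ i in U, Y i ⊆ Z i) : ultraTeam U Y ⊆ ultraTeam U Z :=
  Set.image_mono fun _ hg => (hg.and h).mono fun _ hi => hi.2 hi.1

theorem ultraTeam_congr (h : ∀ᶠ i in U, Y i = Z i) : ultraTeam U Y = ultraTeam U Z :=
  (ultraTeam_mono (h.mono fun _ hi => hi.le)).antisymm
    (ultraTeam_mono (h.mono fun _ hi => hi.ge))

theorem ultraTeam_union : ultraTeam U (fun i => Y i ∪ Z i) = ultraTeam U Y ∪ ultraTeam U Z := by
  rw [ultraTeam, ultraTeam, ultraTeam, ← Set.image_union]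
  congr 1
  ext g
  exact Ultrafilter.eventually_or

theorem forall_mem_ultraTeam {p : ∀ i, (V → M i) → Prop}
    {q : (V → (U : Filter I).Product M) → Prop}
    (hpq : ∀ g, (∀ᶠ i in U, p i (g i)) → q (ultraAssignment U g))
    (h : ∀ᶠ i in U, ∀ s ∈ Y i, p i s) : ∀ s ∈ ultraTeam U Y, q s := by
  rintro _ ⟨g, hg, rfl⟩
  exact hpq g ((hg.and h).mono fun i hi => hi.2 _ hi.1)

variable [DecidableEq V]

theorem update_ultraAssignment (g : ∀ i, V → M i) (x : V) (b : ∀ i, M i) :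
    Function.update (ultraAssignment U g) x (Filter.Product.mk U b) =
      ultraAssignment (M := M) U fun i => Function.update (g i) x (b i) := by
  funext v
  rcases eq_or_ne v x with rfl | hv
  · simp [ultraAssignment]
  · simp [ultraAssignment, hv]

theorem exists_update_mem_ultraTeam {g : ∀ i, V → M i} {x : V}
    (h : ∀ᶠ i in U, ∃ b, Function.update (g i) x b ∈ Y i) :
    ∃ b, Function.update (ultraAssignment U g) x b ∈ ultraTeam U Y := by
  have : ∀ i, Nonempty (M i) := fun i => ⟨g i x⟩
  obtain ⟨b, hb⟩ := skolem.1 h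
  exact ⟨Filter.Product.mk U b, update_ultraAssignment g x b ▸ ⟨_, hb, rfl⟩⟩

theorem dup_ultraTeam (x : V) : dup (ultraTeam U Y) x = ultraTeam U fun i => dup (Y i) x := by
  ext t
  rw [mem_dup_iff]
  constructor
  · rintro ⟨b, g, hg, hgt⟩
    obtain ⟨c, hc⟩ := Filter.Product.mk_surjective (U : Filter I) (t x)
    refine ⟨fun i => Function.update (g i) x (c i), hg.mono fun i hi => ⟨_, hi, _, rfl⟩, ?_⟩
    rw [← update_ultraAssignment, hgt]
    funext v
    by_cases hv : v = x
    · subst hv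
      simpa using hc
    · simp [hv]
  · rintro ⟨g, hg, rfl⟩
    exact exists_update_mem_ultraTeam (hg.mono fun i hi => mem_dup_iff.1 hi)

end Ultraproduct

section Los

variable {I : Type*} {U : Ultrafilter I} {M : I → Type*} {V : Type v}
  {L : FirstOrder.Language.{u, u}} [∀ i, L.Structure (M i)]

theorem realize_ultraAssignment (t : L.Term V) (g : ∀ i, V → M i) :
    t.realize (ultraAssignment U g) = Filter.Product.mk U fun i => t.realize (g i) :=
  Ultraproduct.term_realize_cast (fun v i => g i v) t

theorem relMap_realize_ultraAssignment {n : ℕ} (R : L.Relations n) (ts : Fin n → L.Term V)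
    (g : ∀ i, V → M i) :
    Structure.RelMap R (fun k => (ts k).realize (ultraAssignment U g)) ↔
      ∀ᶠ i in U, Structure.RelMap R fun k => (ts k).realize (g i) := by
  simp only [realize_ultraAssignment]
  exact relMap_quotient_mk' (s := (U : Filter I).productSetoid M) R _

variable [DecidableEq V]

variable {Y : ∀ i, Set (V → M i)}

theorem models_ultraTeam_or {φ ψ : TeamFormula L V}
    (ihφ : ∀ {Z : ∀ i, Set (V → M i)}, (∀ᶠ i in U, Models (M i) φ (Z i)) →
      Models ((U : Filter I).Product M) φ (ultraTeam U Z))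
    (ihψ : ∀ {Z : ∀ i, Set (V → M i)}, (∀ᶠ i in U, Models (M i) ψ (Z i)) →
      Models ((U : Filter I).Product M) ψ (ultraTeam U Z))
    (hY : ∀ᶠ i in U, Models (M i) (.or φ ψ) (Y i)) :
    Models ((U : Filter I).Product M) (.or φ ψ) (ultraTeam U Y) := by
  obtain ⟨Y₁, hY₁⟩ := skolem.1 hY
  obtain ⟨Y₂, hY₂⟩ := skolem.1 hY₁
  refine ⟨ultraTeam U Y₁, ultraTeam U Y₂, ?_, ihφ (hY₂.mono fun _ h => h.2.1),
    ihψ (hY₂.mono fun _ h => h.2.2)⟩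
  rw [← ultraTeam_union]
  exact ultraTeam_congr (hY₂.mono fun _ h => h.1)

theorem models_ultraTeam_ex {x : V} {φ : TeamFormula L V}
    (ih : ∀ {Z : ∀ i, Set (V → M i)}, (∀ᶠ i in U, Models (M i) φ (Z i)) →
      Models ((U : Filter I).Product M) φ (ultraTeam U Z))
    (hY : ∀ᶠ i in U, Models (M i) (.ex x φ) (Y i)) :
    Models ((U : Filter I).Product M) (.ex x φ) (ultraTeam U Y) := by
  simp only [models_ex_iff] at hY ⊢
  obtain ⟨Z, hZ⟩ := skolem.1 hY
  refine ⟨ultraTeam U Z, ?_, ?_, ih (hZ.mono fun _ h => h.2.2)⟩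
  · exact dup_ultraTeam x ▸ ultraTeam_mono (hZ.mono fun _ h => h.1)
  · rintro _ ⟨g, hg, rfl⟩
    exact exists_update_mem_ultraTeam ((hg.and hZ).mono fun _ h => h.2.2.1 _ h.1)

theorem models_ultraTeam (φ : TeamFormula L V) (hY : ∀ᶠ i in U, Models (M i) φ (Y i)) :
    Models ((U : Filter I).Product M) φ (ultraTeam U Y) := by
  induction φ generalizing Y with
  | equal t₁ t₂ =>
    refine forall_mem_ultraTeam (fun g hg => ?_) hY
    rwa [realize_ultraAssignment, realize_ultraAssignment, Filter.Product.mk_eq_mk_iff]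
  | nequal t₁ t₂ =>
    refine forall_mem_ultraTeam (fun g hg => ?_) hY
    rwa [realize_ultraAssignment, realize_ultraAssignment, Ne, Filter.Product.mk_eq_mk_iff,
      ← Ultrafilter.eventually_not]
  | rel R ts => exact forall_mem_ultraTeam (fun g => (relMap_realize_ultraAssignment R ts g).2) hY
  | nrel R ts =>
    refine forall_mem_ultraTeam (fun g hg => ?_) hY
    rwa [relMap_realize_ultraAssignment, ← Ultrafilter.eventually_not]
  | dep xs y =>
    rintro _ ⟨g, hg, rfl⟩ _ ⟨g', hg', rfl⟩ hxs
    refine Filter.Product.mk_eq_mk_iff.2 ?_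
    filter_upwards [hg, hg', hY, (ultraAssignment_comp_eq_iff U).1 hxs] with i hgi hg'i hYi hxsi
    exact hYi _ hgi _ hg'i hxsi
  | indep xs zs ys =>
    rintro _ ⟨g, hg, rfl⟩ _ ⟨g', hg', rfl⟩ hzs
    have : ∀ i, Nonempty (V → M i) := fun i => ⟨g i⟩
    obtain ⟨g'', hg''⟩ := skolem.1 <| by
      filter_upwards [hg, hg', hY, (ultraAssignment_comp_eq_iff U).1 hzs] with i hgi hg'i hYi hzsi
      exact hYi _ hgi _ hg'i hzsi
    exact ⟨_, ⟨g'', hg''.mono fun _ h => h.1, rfl⟩,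
      (ultraAssignment_comp_eq_iff U).2 (hg''.mono fun _ h => h.2.1),
      (ultraAssignment_comp_eq_iff U).2 (hg''.mono fun _ h => h.2.2.1),
      (ultraAssignment_comp_eq_iff U).2 (hg''.mono fun _ h => h.2.2.2)⟩
  | incl xs ys =>
    rintro _ ⟨g, hg, rfl⟩
    have : ∀ i, Nonempty (V → M i) := fun i => ⟨g i⟩
    obtain ⟨g', hg'⟩ := skolem.1 ((hg.and hY).mono fun i hi => hi.2 _ hi.1)
    exact ⟨_, ⟨g', hg'.mono fun _ h => h.1, rfl⟩,
      (ultraAssignment_comp_eq_iff U).2 (hg'.mono fun _ h => h.2)⟩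
  | excl xs ys =>
    rintro _ ⟨g, hg, rfl⟩ _ ⟨g', hg', rfl⟩ heq
    obtain ⟨i, hgi, hg'i, hYi, heqi⟩ :=
      (hg.and (hg'.and (hY.and ((ultraAssignment_comp_eq_iff U).1 (congrFun heq))))).exists
    exact hYi _ hgi _ hg'i (funext heqi)
  | and φ ψ ihφ ihψ => exact ⟨ihφ (hY.mono fun _ h => h.1), ihψ (hY.mono fun _ h => h.2)⟩
  | or φ ψ ihφ ihψ => exact models_ultraTeam_or ihφ ihψ hY
  | ex x φ ih => exact models_ultraTeam_ex ih hY
  | all x φ ih =>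
    show Models _ φ (dup _ x)
    rw [dup_ultraTeam]
    exact ih hY

end Los

/-- Compactness of independence logic `FO(dep, ⊥_c, ⊆, |)` with lax team semantics, for
sets of formulas (with possibly uncountably many free variables): if every finite subset
of `Γ` is satisfied by some structure together with some nonempty team, then so is `Γ`. -/
theorem compactness_independence_logic_lax
    {L : FirstOrder.Language.{u, u}} {V : Type u} [DecidableEq V]
    (Γ : Set (TeamFormula L V))
    (h : ∀ Γ₀ ⊆ Γ, Γ₀.Finite →
      ∃ (M : Type u) (str : L.Structure M) (X : Set (V → M)),
        X.Nonempty ∧ ∀ φ ∈ Γ₀, Models (str := str) M φ X) :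
    ∃ (M : Type u) (str : L.Structure M) (X : Set (V → M)),
      X.Nonempty ∧ ∀ φ ∈ Γ, Models (str := str) M φ X := by
  choose M str X hX hXΓ using fun i : Finset Γ =>
    h (Subtype.val '' (i : Set Γ)) (Subtype.coe_image_subset _ _) (i.finite_toSet.image _)
  let U : Ultrafilter (Finset Γ) := .of atTop
  refine ⟨(U : Filter _).Product M, inferInstance, ultraTeam U X, ultraTeam_nonempty hX,
    fun φ hφ => models_ultraTeam φ ?_⟩
  filter_upwards [Ultrafilter.of_le atTop (eventually_ge_atTop {⟨φ, hφ⟩})] with i hi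
  exact hXΓ i φ ⟨⟨φ, hφ⟩, Finset.singleton_subset_iff.1 hi, rfl⟩

end TeamSemantics
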